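/- Let d be a prime, F = ℤ/dℤ, ω = exp(2πi/d), and let C ⊆ F^n be a self-orthogonal linear subspace with dim_F C = κ. Define φ_{x,z,v} = |C|^{−1/2}·Σ_{w∈C} ω^{z·w} e_{w+v+x} in ℂ^{F^n}. Let Γ be a transversal of F^n/C^⊥ and V a transversal of C^⊥/C. Then the d^n vectors φ_{x,z,v}, indexed by x ∈ Γ, z ∈ Γ, v ∈ V, form an orthonormal family (hence an orthonormal basis) of ℂ^{F^n}: ⟨φ_{x,z,v}, φ_{x',z',v'}⟩ = 1 if (x,z,v) = (x',z',v') and = 0 otherwise. -/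

import Mathlib

/- The state φ_{x,z,v} is supported on the coset x + v + C, where it equals |C|^{-1/2} times the
character w ↦ ω^{z·w}. Since C ⊆ C^⊥ and V ⊆ C^⊥, distinct pairs (x, v) ∈ Γ × V give distinct,
hence disjoint, cosets. On a common coset the inner product is the average over C of the character
w ↦ ω^{(z' - z)·w}, which vanishes unless z' - z ∈ C^⊥, i.e. unless z = z'. -/

open scoped BigOperators

noncomputable section

/-- Dot product `x·y = Σᵢ xᵢ yᵢ` in `ℤ/dℤ`. -/
def dotp {d n : ℕ} (x y : Fin n → ZMod d) : ZMod d := ∑ i, x i * y i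

/-- `C^⊥ = {y : ∀ x ∈ C, x·y = 0}`. -/
def dualSet {d n : ℕ} (C : Set (Fin n → ZMod d)) : Set (Fin n → ZMod d) :=
  {y | ∀ x ∈ C, dotp x y = 0}

/-- A transversal of `Fⁿ/C^⊥`: contains exactly one element of each coset of `C^⊥`. -/
def IsTransversal {d n : ℕ} (C : Set (Fin n → ZMod d)) (Γ : Set (Fin n → ZMod d)) : Prop :=
  ∀ y : Fin n → ZMod d, ∃! g, g ∈ Γ ∧ y - g ∈ dualSet C

/-- A transversal of `C^⊥/C`: a subset of `C^⊥` containing exactly one element of each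
coset of `C` inside `C^⊥`. -/
def IsTransversalIn {d n : ℕ} (C : Set (Fin n → ZMod d)) (V : Set (Fin n → ZMod d)) : Prop :=
  V ⊆ dualSet C ∧ ∀ y ∈ dualSet C, ∃! v, v ∈ V ∧ y - v ∈ C

/-- `ω = exp(2πi/d)`. -/
def omg (d : ℕ) : ℂ := Complex.exp (2 * Real.pi * Complex.I / d)

/-- The standard basis vector `e_c` of `ℂ^{Fⁿ}`. -/
def stdv {d n : ℕ} (c : Fin n → ZMod d) : (Fin n → ZMod d) → ℂ :=
  fun a => if a = c then 1 else 0

/-- The CSS basis state `φ_{x,z,v} = |C|^{−1/2}·Σ_{w∈C} ω^{z·w} e_{w+v+x}`. -/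
def phiv {d n : ℕ} (C : Submodule (ZMod d) (Fin n → ZMod d))
    (x z v : Fin n → ZMod d) : (Fin n → ZMod d) → ℂ :=
  fun a => (1 / (Real.sqrt (Nat.card C) : ℂ)) *
    ∑ᶠ w ∈ (C : Set (Fin n → ZMod d)), omg d ^ (dotp z w).val * stdv (w + v + x) a

open scoped Classical

lemma dotp_comm {d n : ℕ} (x y : Fin n → ZMod d) : dotp x y = dotp y x := by
  simp only [dotp, mul_comm]

lemma dotp_add_right {d n : ℕ} (x y z : Fin n → ZMod d) :
    dotp x (y + z) = dotp x y + dotp x z := by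
  simp only [dotp, Pi.add_apply, mul_add, Finset.sum_add_distrib]

lemma dotp_sub_left {d n : ℕ} (x y z : Fin n → ZMod d) :
    dotp (x - y) z = dotp x z - dotp y z := by
  simp only [dotp, Pi.sub_apply, sub_mul, Finset.sum_sub_distrib]

section dualSet

variable {d n : ℕ} {C : Set (Fin n → ZMod d)}

lemma zero_mem_dualSet : (0 : Fin n → ZMod d) ∈ dualSet C := by
  intro w _
  simp [dotp]

lemma sub_mem_dualSet {p q : Fin n → ZMod d} (hp : p ∈ dualSet C) (hq : q ∈ dualSet C) :
    p - q ∈ dualSet C := by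
  intro w hw
  rw [dotp_comm, dotp_sub_left, dotp_comm, hp w hw, dotp_comm, hq w hw, sub_zero]

lemma IsTransversal.eq_of_sub_mem {Γ : Set (Fin n → ZMod d)} (hΓ : IsTransversal C Γ)
    {g g' : Fin n → ZMod d} (hg : g ∈ Γ) (hg' : g' ∈ Γ) (h : g - g' ∈ dualSet C) : g = g' :=
  (hΓ g).unique ⟨hg, by simpa using zero_mem_dualSet⟩ ⟨hg', h⟩

lemma IsTransversalIn.eq_of_sub_mem {V : Set (Fin n → ZMod d)} (hV : IsTransversalIn C V)
    (hC : (0 : Fin n → ZMod d) ∈ C) {v v' : Fin n → ZMod d} (hv : v ∈ V) (hv' : v' ∈ V)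
    (h : v - v' ∈ C) : v = v' :=
  (hV.2 v (hV.1 hv)).unique ⟨hv, by simpa using hC⟩ ⟨hv', h⟩

end dualSet

lemma omg_pow_val (d : ℕ) [NeZero d] (s : ZMod d) : omg d ^ s.val = ZMod.stdAddChar s := by
  rw [ZMod.stdAddChar_apply, ZMod.toCircle_apply, omg, ← Complex.exp_nat_mul]
  ring_nf

def dotpChar {d n : ℕ} [NeZero d] (C : Submodule (ZMod d) (Fin n → ZMod d))
    (y : Fin n → ZMod d) : AddChar C ℂ :=
  ZMod.stdAddChar.compAddMonoidHom
    ((AddMonoidHom.mk' (dotp y) (dotp_add_right y)).comp C.subtype.toAddMonoidHom)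

lemma sum_stdAddChar_dotp {d n : ℕ} [NeZero d] (C : Submodule (ZMod d) (Fin n → ZMod d))
    (y : Fin n → ZMod d) :
    ∑ w : C, ZMod.stdAddChar (dotp y w) =
      if y ∈ dualSet (C : Set _) then (Nat.card C : ℂ) else 0 := by
  have htriv : dotpChar C y = 0 ↔ y ∈ dualSet (C : Set _) := by
    rw [AddChar.eq_zero_iff]
    refine ⟨fun h w hw => ?_, fun h w => ?_⟩
    · rw [dotp_comm]
      exact ZMod.injective_stdAddChar ((h ⟨w, hw⟩).trans (AddChar.map_zero_eq_one _).symm)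
    · change ZMod.stdAddChar (dotp y w) = 1
      rw [dotp_comm, h w w.2, AddChar.map_zero_eq_one]
  rw [Nat.card_eq_fintype_card, ← htriv]
  exact AddChar.sum_eq_ite (dotpChar C y)

lemma Fintype.sum_indicator_sub {G M S : Type*} [AddCommGroup G] [Fintype G] [AddCommMonoid M]
    [SetLike S G] (s : S) (f : G → M) (c : G) :
    ∑ a, (s : Set G).indicator f (a - c) = ∑ w : s, f w := by
  rw [Fintype.sum_equiv (Equiv.subRight c) (fun a => (s : Set G).indicator f (a - c))
    ((s : Set G).indicator f) (fun _ => rfl)]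
  simp only [Set.indicator_apply, Finset.sum_ite, Finset.sum_const_zero, add_zero]
  exact Finset.sum_subtype _ (by simp) f

section phiv

variable {d n : ℕ} [NeZero d] (C : Submodule (ZMod d) (Fin n → ZMod d))

lemma phiv_apply (x z v a : Fin n → ZMod d) :
    phiv C x z v a = (1 / (Real.sqrt (Nat.card C) : ℂ)) *
      (C : Set _).indicator (fun w => ZMod.stdAddChar (dotp z w)) (a - (v + x)) := by
  rw [phiv, finsum_mem_def, finsum_eq_single _ (a - (v + x))]
  · have hcancel : a - (v + x) + v + x = a := by abel
    simp [Set.indicator_apply, stdv, omg_pow_val, hcancel]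
  · intro w hw
    have hne : a ≠ w + v + x := fun h => hw (by rw [h]; abel)
    simp [Set.indicator_apply, stdv, hne]

lemma conj_phiv_mul_phiv_of_eq (x z z' v a : Fin n → ZMod d) :
    starRingEnd ℂ (phiv C x z v a) * phiv C x z' v a =
      (Nat.card C : ℂ)⁻¹ *
        (C : Set _).indicator (fun w => ZMod.stdAddChar (dotp (z' - z) w)) (a - (v + x)) := by
  have hnorm : starRingEnd ℂ (1 / (Real.sqrt (Nat.card C) : ℂ)) *
      (1 / (Real.sqrt (Nat.card C) : ℂ)) = (Nat.card C : ℂ)⁻¹ := by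
    rw [map_div₀, map_one, Complex.conj_ofReal, div_mul_div_comm, one_mul, ← Complex.ofReal_mul,
      Real.mul_self_sqrt (Nat.cast_nonneg _), one_div, Complex.ofReal_natCast]
  have hchar : ∀ w, starRingEnd ℂ (ZMod.stdAddChar (dotp z w)) * ZMod.stdAddChar (dotp z' w) =
      ZMod.stdAddChar (dotp (z' - z) w) := by
    intro w
    rw [← AddChar.map_neg_eq_conj, ← AddChar.map_add_eq_mul, dotp_sub_left, neg_add_eq_sub]
  rw [phiv_apply, phiv_apply, map_mul, ← hnorm]
  by_cases h : a - (v + x) ∈ (C : Set _)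
  · simp only [Set.indicator_of_mem h, ← hchar]
    ring
  · simp only [Set.indicator_of_notMem h, map_zero, mul_zero]

lemma sum_conj_phiv_mul_phiv_of_eq (x z z' v : Fin n → ZMod d) :
    ∑ a, starRingEnd ℂ (phiv C x z v a) * phiv C x z' v a =
      if z' - z ∈ dualSet (C : Set _) then 1 else 0 := by
  simp_rw [conj_phiv_mul_phiv_of_eq]
  rw [← Finset.mul_sum, Fintype.sum_indicator_sub, sum_stdAddChar_dotp]
  have hcard : (Nat.card C : ℂ) ≠ 0 := Nat.cast_ne_zero.2 Nat.card_pos.ne'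
  split_ifs
  · exact inv_mul_cancel₀ hcard
  · exact mul_zero _

end phiv

section coset

variable {d n : ℕ} {C : Submodule (ZMod d) (Fin n → ZMod d)}
  (hC : (C : Set (Fin n → ZMod d)) ⊆ dualSet (C : Set (Fin n → ZMod d)))
  {Γ V : Set (Fin n → ZMod d)} (hΓ : IsTransversal (C : Set (Fin n → ZMod d)) Γ)
  (hV : IsTransversalIn (C : Set (Fin n → ZMod d)) V)
include hC hΓ hV

lemma eq_and_eq_of_mem_coset {x x' v v' a : Fin n → ZMod d}
    (hx : x ∈ Γ) (hx' : x' ∈ Γ) (hv : v ∈ V) (hv' : v' ∈ V)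
    (ha : a - (v + x) ∈ C) (ha' : a - (v' + x') ∈ C) : x = x' ∧ v = v' := by
  have hxx' : x = x' := by
    refine hΓ.eq_of_sub_mem hx hx' ?_
    have hsplit : x - x' = (a - (v' + x') - (a - (v + x))) - (v - v') := by abel
    rw [hsplit]
    exact sub_mem_dualSet (hC (C.sub_mem ha' ha)) (sub_mem_dualSet (hV.1 hv) (hV.1 hv'))
  subst hxx'
  refine ⟨rfl, hV.eq_of_sub_mem C.zero_mem hv hv' ?_⟩
  have hsplit : v - v' = a - (v' + x) - (a - (v + x)) := by abel
  rw [hsplit]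
  exact C.sub_mem ha' ha

lemma sum_conj_phiv_mul_phiv_of_ne [NeZero d] {x x' z z' v v' : Fin n → ZMod d}
    (hx : x ∈ Γ) (hx' : x' ∈ Γ) (hv : v ∈ V) (hv' : v' ∈ V) (hxv : ¬(x = x' ∧ v = v')) :
    ∑ a, starRingEnd ℂ (phiv C x z v a) * phiv C x' z' v' a = 0 := by
  refine Finset.sum_eq_zero fun a _ => ?_
  rw [phiv_apply, phiv_apply]
  by_cases ha : a - (v + x) ∈ C
  · by_cases ha' : a - (v' + x') ∈ C
    · exact absurd (eq_and_eq_of_mem_coset hC hΓ hV hx hx' hv hv' ha ha') hxv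
    · simp [Set.indicator_of_notMem (show a - (v' + x') ∉ (C : Set _) from ha')]
  · simp [Set.indicator_of_notMem (show a - (v + x) ∉ (C : Set _) from ha)]

end coset

theorem stmt_17_general (d : ℕ) [NeZero d] (n : ℕ)
    (C : Submodule (ZMod d) (Fin n → ZMod d))
    (hC : (C : Set (Fin n → ZMod d)) ⊆ dualSet (C : Set (Fin n → ZMod d)))
    (Γ : Set (Fin n → ZMod d)) (hΓ : IsTransversal (C : Set (Fin n → ZMod d)) Γ)
    (V : Set (Fin n → ZMod d)) (hV : IsTransversalIn (C : Set (Fin n → ZMod d)) V) :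
    ∀ x ∈ Γ, ∀ z ∈ Γ, ∀ v ∈ V, ∀ x' ∈ Γ, ∀ z' ∈ Γ, ∀ v' ∈ V,
      (∑ a : Fin n → ZMod d, starRingEnd ℂ (phiv C x z v a) * phiv C x' z' v' a) =
        if x = x' ∧ z = z' ∧ v = v' then 1 else 0 := by
  intro x hx z hz v hv x' hx' z' hz' v' hv'
  by_cases hxv : x = x' ∧ v = v'
  · obtain ⟨rfl, rfl⟩ := hxv
    rw [sum_conj_phiv_mul_phiv_of_eq]
    refine if_congr ⟨fun h => ⟨rfl, (hΓ.eq_of_sub_mem hz' hz h).symm, rfl⟩, ?_⟩ rfl rfl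
    rintro ⟨-, rfl, -⟩
    simpa using zero_mem_dualSet
  · rw [sum_conj_phiv_mul_phiv_of_ne hC hΓ hV hx hx' hv hv' hxv, if_neg (by tauto)]

theorem stmt_17 (d : ℕ) [NeZero d] (hd : d.Prime) (n κ : ℕ)
    (C : Submodule (ZMod d) (Fin n → ZMod d))
    (hC : (C : Set (Fin n → ZMod d)) ⊆ dualSet (C : Set (Fin n → ZMod d)))
    (hκ : Module.finrank (ZMod d) C = κ)
    (Γ : Set (Fin n → ZMod d)) (hΓ : IsTransversal (C : Set (Fin n → ZMod d)) Γ)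
    (V : Set (Fin n → ZMod d)) (hV : IsTransversalIn (C : Set (Fin n → ZMod d)) V) :
    ∀ x ∈ Γ, ∀ z ∈ Γ, ∀ v ∈ V, ∀ x' ∈ Γ, ∀ z' ∈ Γ, ∀ v' ∈ V,
      (∑ a : Fin n → ZMod d, starRingEnd ℂ (phiv C x z v a) * phiv C x' z' v' a) =
        if x = x' ∧ z = z' ∧ v = v' then 1 else 0 :=
  stmt_17_general d n C hC Γ hΓ V hV

end
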